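/- arXiv:2508.11587 — 2 statements merged into one kernel-verified Lean document; each statement's English description precedes it below -/
import Mathlib

section
/- For n >= 2, the total number of inversions over all Cayley permutations of length n is (n(n-1)/4)(Fub_n - Fub_{n-1}), i.e., 4 * sum_{w in C_n} inv(w) = n(n-1)(Fub_n - Fub_{n-1}). -/
/-! Summing over pairs of positions, the total number of inversions is
`∑_{i < j} #{w | w j < w i}`. Permuting positions preserves the Cayley property, so for `i ≠ j`
the words with `w i < w j` and those with `w j < w i` are equinumerous, and the number of words
with `w i = w j` does not depend on the pair. For the pair `(0, 1)`, deleting the repeated first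
letter is a bijection onto Cayley permutations of length `n - 1`. Hence each of the `n(n-1)/2`
pairs `i < j` contributes `(Fub n - Fub (n - 1)) / 2`. -/

/-- A Cayley permutation of length `n`, encoded with 0-indexed values (value `k : Fin n`
represents the positive integer `k+1`): if a value appears then all smaller values
appear. -/
def IsCayley (n : ℕ) (w : Fin n → Fin n) : Prop :=
  ∀ (i : Fin n) (v : Fin n), v ≤ w i → ∃ j, w j = v

instance (n : ℕ) : DecidablePred (IsCayley n) := fun _ => by unfold IsCayley; infer_instance

/-- `Fub m` is the number of Cayley permutations of length `m` (the `m`-th Fubini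
number). -/
def Fub (m : ℕ) : ℕ :=
  (Finset.univ.filter (fun w : Fin m → Fin m => IsCayley m w)).card

/-- The number of inversions of a word: pairs `(i,j)` with `i < j` and `w i > w j`. -/
def invCount (n : ℕ) (w : Fin n → Fin n) : ℕ :=
  (Finset.univ.filter (fun p : Fin n × Fin n => p.1 < p.2 ∧ w p.2 < w p.1)).card


open Finset

theorem Finset.card_filter_lt_add_card_filter_eq_add_card_filter_gt {α β : Type*} [LinearOrder β]
    (s : Finset α) (f g : α → β) :
    #{a ∈ s | f a < g a} + #{a ∈ s | f a = g a} + #{a ∈ s | g a < f a} = #s := by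
  classical
  have h_le : #{a ∈ s | f a < g a} + #{a ∈ s | f a = g a} = #{a ∈ s | f a ≤ g a} := by
    rw [← card_union_of_disjoint (disjoint_filter.2 fun _ _ h => h.ne), ← filter_or]
    simp only [le_iff_lt_or_eq]
  rw [h_le]
  simpa only [not_le] using card_filter_add_card_filter_not (s := s) (fun a => f a ≤ g a)

theorem Equiv.Perm.exists_apply_eq_and_apply_eq {α : Type*} [DecidableEq α] {a b i j : α}
    (hab : a ≠ b) (hij : i ≠ j) : ∃ σ : Equiv.Perm α, σ a = i ∧ σ b = j := by
  have hb : swap a i b ≠ i := fun h =>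
    hab ((swap a i).injective (h.trans (swap_apply_left a i).symm)).symm
  refine ⟨(swap a i).trans (swap (swap a i b) j), ?_, ?_⟩
  · simp [swap_apply_of_ne_of_ne hb.symm hij]
  · simp

theorem Fintype.two_mul_card_product_filter_lt (α : Type*) [Fintype α] [LinearOrder α] :
    2 * #{p : α × α | p.1 < p.2} = Fintype.card α * (Fintype.card α - 1) := by
  rw [Fintype.card_product_filter_lt, Nat.choose_two_right,
    Nat.mul_div_cancel' (Nat.even_mul_pred_self _).two_dvd]

def cayleyWords (n : ℕ) : Finset (Fin n → Fin n) := {w | IsCayley n w}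

theorem card_cayleyWords (n : ℕ) : #(cayleyWords n) = Fub n := rfl

theorem isCayley_comp_perm {n : ℕ} (w : Fin n → Fin n) (σ : Equiv.Perm (Fin n)) :
    IsCayley n (w ∘ σ) ↔ IsCayley n w := by
  constructor <;> intro h i v hv
  · obtain ⟨j, hj⟩ := h (σ.symm i) v (by simpa using hv)
    exact ⟨σ j, hj⟩
  · obtain ⟨j, hj⟩ := h (σ i) v hv
    exact ⟨σ.symm j, by simpa using hj⟩

theorem card_filter_cayleyWords_comp_perm {n : ℕ} (σ : Equiv.Perm (Fin n))
    (P : (Fin n → Fin n) → Prop) [DecidablePred P] :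
    #{w ∈ cayleyWords n | P (w ∘ σ)} = #{w ∈ cayleyWords n | P w} := by
  refine card_nbij' (· ∘ σ) (· ∘ σ.symm) (fun w hw => ?_) (fun w hw => ?_) (fun w _ => ?_)
    (fun w _ => ?_) <;> simp_all [cayleyWords, Function.comp_assoc, isCayley_comp_perm]

theorem card_cayleyWords_filter_gt_eq_lt {n : ℕ} (i j : Fin n) :
    #{w ∈ cayleyWords n | w j < w i} = #{w ∈ cayleyWords n | w i < w j} := by
  simpa using card_filter_cayleyWords_comp_perm (Equiv.swap i j) (fun w => w i < w j)

theorem IsCayley.injective_of_apply_eq_last {m : ℕ} {w : Fin (m + 1) → Fin (m + 1)}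
    (hw : IsCayley (m + 1) w) {k : Fin (m + 1)} (hk : w k = Fin.last m) : Function.Injective w :=
  Finite.injective_iff_surjective.2 fun v => hw k v (hk ▸ Fin.le_last v)

def dupHead {m : ℕ} (u : Fin (m + 1) → Fin (m + 1)) : Fin (m + 2) → Fin (m + 2) :=
  Fin.cons (u 0).castSucc (Fin.castSucc ∘ u)

@[simp]
theorem dupHead_zero {m : ℕ} (u : Fin (m + 1) → Fin (m + 1)) :
    dupHead u 0 = (u 0).castSucc := rfl

@[simp]
theorem dupHead_one {m : ℕ} (u : Fin (m + 1) → Fin (m + 1)) :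
    dupHead u 1 = (u 0).castSucc := rfl

@[simp]
theorem dupHead_succ {m : ℕ} (u : Fin (m + 1) → Fin (m + 1)) (k : Fin (m + 1)) :
    dupHead u k.succ = (u k).castSucc := rfl

theorem dupHead_injective {m : ℕ} : Function.Injective (dupHead (m := m)) :=
  fun _ _ h => funext fun k => Fin.castSucc_injective _ (by simpa using congrFun h k.succ)

theorem IsCayley.dupHead {m : ℕ} {u : Fin (m + 1) → Fin (m + 1)} (hu : IsCayley (m + 1) u) :
    IsCayley (m + 2) (_root_.dupHead u) := by
  have hsucc : ∀ i v, v ≤ (u i).castSucc → ∃ j, _root_.dupHead u j = v := fun i v hv => by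
    have hv_ne : v ≠ Fin.last (m + 1) := Fin.ne_last_of_lt (hv.trans_lt (Fin.castSucc_lt_last _))
    obtain ⟨j, hj⟩ := hu i (v.castPred hv_ne) ((Fin.castPred_le_iff _).2 hv)
    exact ⟨j.succ, by simp [hj]⟩
  intro i
  cases i using Fin.cases with
  | zero => exact hsucc 0
  | succ i => exact hsucc i

theorem IsCayley.exists_dupHead_eq {m : ℕ} {w : Fin (m + 2) → Fin (m + 2)}
    (hw : IsCayley (m + 2) w) (h01 : w 0 = w 1) :
    ∃ u, IsCayley (m + 1) u ∧ _root_.dupHead u = w := by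
  have hne : ∀ k, w k ≠ Fin.last (m + 1) := fun k hk =>
    zero_ne_one ((hw.injective_of_apply_eq_last hk) h01)
  refine ⟨fun k => (w k.succ).castPred (hne _), fun i v hv => ?_, funext fun k => ?_⟩
  · obtain ⟨j, hj⟩ := hw i.succ v.castSucc ((Fin.le_castPred_iff _).1 hv)
    cases j using Fin.cases with
    | zero => exact ⟨0, by simp [← h01, hj]⟩
    | succ j => exact ⟨j, by simp [hj]⟩
  · cases k using Fin.cases with
    | zero => simp [h01]
    | succ k => simp

theorem card_cayleyWords_filter_apply_zero_eq_apply_one (m : ℕ) :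
    #{w ∈ cayleyWords (m + 2) | w 0 = w 1} = Fub (m + 1) := by
  refine (card_bij (fun u _ => dupHead u) (fun u hu => ?_) (fun u _ v _ h => dupHead_injective h)
    (fun w hw => ?_)).symm
  · simp_all [cayleyWords, IsCayley.dupHead]
  · simp only [cayleyWords, mem_filter, mem_univ, true_and] at hw
    obtain ⟨u, hu, rfl⟩ := hw.1.exists_dupHead_eq hw.2
    exact ⟨u, by simpa [cayleyWords], rfl⟩

theorem card_cayleyWords_filter_eq_of_ne {n : ℕ} {i j : Fin n} (hij : i ≠ j) :
    #{w ∈ cayleyWords n | w i = w j} = Fub (n - 1) := by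
  obtain ⟨m, rfl⟩ : ∃ m, n = m + 2 := ⟨n - 2, by have := i.2; have := j.2; omega⟩
  obtain ⟨σ, rfl, rfl⟩ := Equiv.Perm.exists_apply_eq_and_apply_eq zero_ne_one hij
  simpa using (card_filter_cayleyWords_comp_perm σ fun w => w 0 = w 1).trans
    (card_cayleyWords_filter_apply_zero_eq_apply_one m)

theorem two_mul_card_cayleyWords_filter_gt {n : ℕ} {i j : Fin n} (hij : i ≠ j) :
    2 * #{w ∈ cayleyWords n | w j < w i} = Fub n - Fub (n - 1) := by
  have := card_filter_lt_add_card_filter_eq_add_card_filter_gt (cayleyWords n) (· i) (· j)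
  rw [card_cayleyWords_filter_eq_of_ne hij, ← card_cayleyWords_filter_gt_eq_lt,
    card_cayleyWords] at this
  omega

theorem sum_invCount_cayleyWords (n : ℕ) :
    ∑ w ∈ cayleyWords n, invCount n w =
      ∑ p : Fin n × Fin n with p.1 < p.2, #{w ∈ cayleyWords n | w p.2 < w p.1} := by
  convert sum_card_bipartiteAbove_eq_sum_card_bipartiteBelow
    (fun (w : Fin n → Fin n) (p : Fin n × Fin n) => w p.2 < w p.1) using 3 with w
  · simp [invCount, bipartiteAbove, filter_filter]
  · rfl

theorem total_inversions_cayley_general (n : ℕ) :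
    4 * ∑ w ∈ Finset.univ.filter (fun w : Fin n → Fin n => IsCayley n w), invCount n w =
      n * (n - 1) * (Fub n - Fub (n - 1)) := by
  calc 4 * ∑ w ∈ cayleyWords n, invCount n w
      = ∑ p : Fin n × Fin n with p.1 < p.2,
          2 * (2 * #{w ∈ cayleyWords n | w p.2 < w p.1}) := by
        rw [sum_invCount_cayleyWords, mul_sum]
        exact sum_congr rfl fun _ _ => by ring
    _ = ∑ p : Fin n × Fin n with p.1 < p.2, 2 * (Fub n - Fub (n - 1)) :=
        sum_congr rfl fun p hp => by rw [two_mul_card_cayleyWords_filter_gt (mem_filter.1 hp).2.ne]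
    _ = 2 * #{p : Fin n × Fin n | p.1 < p.2} * (Fub n - Fub (n - 1)) := by
        rw [sum_const, smul_eq_mul]; ring
    _ = n * (n - 1) * (Fub n - Fub (n - 1)) := by
        rw [Fintype.two_mul_card_product_filter_lt, Fintype.card_fin]

/-- For `n ≥ 2`, four times the total number of inversions over all Cayley
permutations of length `n` equals `n(n-1)(Fub n - Fub (n-1))`. -/
theorem total_inversions_cayley (n : ℕ) (hn : 2 ≤ n) :
    4 * ∑ w ∈ Finset.univ.filter (fun w : Fin n → Fin n => IsCayley n w), invCount n w =
      n * (n - 1) * (Fub n - Fub (n - 1)) :=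
  total_inversions_cayley_general n
end

section
/- Fix a word w of length n with content (c_1,...,c_l). The total number of ties over all distinct rearrangements of w equals (2/n) * sum_{i=1}^{l} multinomial(n; c_1,...,c_{i-1}, c_i - 2, 2, c_{i+1},...,c_l), where terms with c_i < 2 are zero. -/
/-- The number of ties of a word: indices `i ∈ [n-1]` with `u i = u (i+1)`. -/
def tieCount (n : ℕ) (u : Fin n → ℕ) : ℕ :=
  (Finset.univ.filter
    (fun p : Fin n × Fin n => (p.1 : ℕ) + 1 = (p.2 : ℕ) ∧ u p.1 = u p.2)).card

/-!
Sum the number of ties of `w ∘ σ` over all permutations `σ`. Each rearrangement is hit by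
exactly `∏ cₖ!` permutations (its stabilizer), so this is `∏ cₖ!` times the sum in the theorem.
Exchanging the sums, it is also a sum over the `n - 1` adjacent position pairs of the number of
`σ` placing equal letters there; that number is the same for every ordered pair of distinct
positions, since `S_n` acts 2-transitively. Averaging over all `n (n - 1)` such pairs turns `n`
times the sum into `n!` times the number of ordered pairs of distinct positions carrying equal
letters in `w`, which is `∑ cₖ (cₖ - 1)`; and `∏ cₖ!` times the `k`-th multinomial term is
`n! cₖ (cₖ - 1) / 2`.
-/

open Finset Equiv Nat

section Rearrangements

variable {ι α : Type*} [Fintype ι] [DecidableEq ι] [DecidableEq α]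

lemma card_perm_comp_eq_comp (w : ι → α) (τ : Perm ι) :
    #{σ : Perm ι | w ∘ σ = w ∘ τ} = #{σ : Perm ι | w ∘ σ = w} := by
  refine card_equiv (Equiv.mulRight τ⁻¹) fun σ => ?_
  simp only [mem_filter, mem_univ, true_and, coe_mulRight, Perm.coe_mul]
  constructor
  · intro h; ext i; simpa using congrFun h (τ⁻¹ i)
  · intro h; ext i; simpa using congrFun h (τ i)

lemma sum_perm_comp_eq_card_stabilizer_smul {M : Type*} [AddCommMonoid M] (w : ι → α)
    (g : (ι → α) → M) :
    ∑ σ : Perm ι, g (w ∘ σ) =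
      #{σ : Perm ι | w ∘ σ = w} •
        ∑ u ∈ univ.image (fun σ : Perm ι => w ∘ σ), g u := by
  rw [Finset.sum_comp, smul_sum]
  refine sum_congr rfl fun u hu => ?_
  obtain ⟨τ, -, rfl⟩ := mem_image.mp hu
  rw [card_perm_comp_eq_comp]

lemma card_perm_comp_eq_self (w : ι → α) :
    #{σ : Perm ι | w ∘ σ = w} = ∏ x ∈ univ.image w, (#{i | w i = x})! := by
  simpa [Fintype.card_subtype] using DomMulAct.stabilizer_card' w

omit [Fintype ι] in
lemma Equiv.Perm.exists_apply_eq_and_apply_eq_s17 {a b a' b' : ι} (hab : a ≠ b) (hab' : a' ≠ b') :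
    ∃ π : Perm ι, π a = a' ∧ π b = b' := by
  have hb : swap a a' b ≠ a' := by
    rwa [Ne, swap_apply_eq_iff, swap_apply_right, eq_comm]
  refine ⟨swap (swap a a' b) b' * swap a a', ?_, ?_⟩
  · rw [Perm.mul_apply, swap_apply_left, swap_apply_of_ne_of_ne hb.symm hab']
  · rw [Perm.mul_apply, swap_apply_left]

lemma card_perm_apply_eq_apply_of_ne (w : ι → α) {a b a' b' : ι} (hab : a ≠ b)
    (hab' : a' ≠ b') :
    #{σ : Perm ι | w (σ a) = w (σ b)} = #{σ : Perm ι | w (σ a') = w (σ b')} := by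
  obtain ⟨π, rfl, rfl⟩ := Perm.exists_apply_eq_and_apply_eq_s17 hab hab'
  refine card_equiv (Equiv.mulRight π⁻¹) fun σ => ?_
  simp [Perm.mul_apply]

lemma sum_offDiag_card_perm_apply_eq (w : ι → α) :
    ∑ p ∈ (univ : Finset ι).offDiag, #{σ : Perm ι | w (σ p.1) = w (σ p.2)} =
      (Fintype.card ι)! * #{p ∈ (univ : Finset ι).offDiag | w p.1 = w p.2} := by
  have hσ (σ : Perm ι) : #{p ∈ (univ : Finset ι).offDiag | w (σ p.1) = w (σ p.2)} =
      #{p ∈ (univ : Finset ι).offDiag | w p.1 = w p.2} :=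
    card_equiv (σ.prodCongr σ) fun p => by simp [mem_offDiag]
  simp_rw [card_filter]
  rw [sum_comm]
  simp_rw [← card_filter, hσ]
  rw [sum_const, Finset.card_univ, Fintype.card_perm, smul_eq_mul]

omit [DecidableEq ι] in
lemma card_offDiag_filter_apply_eq (w : ι → α) :
    #{p ∈ (univ : Finset ι).offDiag | w p.1 = w p.2} =
      ∑ x ∈ univ.image w, #{i | w i = x} * (#{i | w i = x} - 1) := by
  rw [card_eq_sum_card_fiberwise (f := fun p => w p.1) (t := univ.image w) (by simp [Set.MapsTo])]
  refine sum_congr rfl fun x _ => ?_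
  rw [Nat.mul_sub_one, ← offDiag_card]
  congr 1
  ext p
  simp only [mem_filter, mem_offDiag, mem_univ, true_and]
  grind

end Rearrangements

def adjacentPairs (n : ℕ) : Finset (Fin n × Fin n) := {p | (p.1 : ℕ) + 1 = p.2}

lemma tieCount_eq_card_adjacentPairs_filter {n : ℕ} (u : Fin n → ℕ) :
    tieCount n u = #{p ∈ adjacentPairs n | u p.1 = u p.2} := by
  rw [tieCount, adjacentPairs, filter_filter]

lemma adjacentPairs_subset_offDiag (n : ℕ) : adjacentPairs n ⊆ univ.offDiag := by
  intro p hp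
  simp only [adjacentPairs, mem_filter, mem_univ, true_and] at hp
  simp only [mem_offDiag, mem_univ, true_and, ne_eq]
  intro h
  rw [h] at hp
  omega

lemma card_adjacentPairs : ∀ n, #(adjacentPairs n) = n - 1
  | 0 => rfl
  | m + 1 => by
    rw [Nat.add_sub_cancel]
    refine Eq.trans (Eq.symm ?_) (Finset.card_fin m)
    refine card_nbij (fun i : Fin m => (i.castSucc, i.succ)) (fun i _ => by simp [adjacentPairs])
      (fun i _ j _ h => Fin.succ_injective _ (congrArg Prod.snd h)) ?_
    rintro ⟨a, b⟩ hab
    simp only [adjacentPairs, coe_filter, mem_univ, true_and, Set.mem_ofPred_eq] at hab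
    exact ⟨⟨a, by omega⟩, mem_univ _, Prod.ext rfl (Fin.ext hab)⟩

lemma mul_sum_adjacentPairs_of_const {n : ℕ} (f : Fin n × Fin n → ℕ)
    (hf : ∀ p ∈ univ.offDiag, ∀ q ∈ univ.offDiag, f p = f q) :
    n * ∑ p ∈ adjacentPairs n, f p = ∑ p ∈ univ.offDiag, f p := by
  obtain h | ⟨q, hq⟩ := (univ : Finset (Fin n)).offDiag.eq_empty_or_nonempty
  · have hadj : adjacentPairs n = ∅ := subset_empty.mp (h ▸ adjacentPairs_subset_offDiag n)
    rw [h, hadj, sum_empty, mul_zero]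
  rw [sum_const_nat fun p hp => hf p (adjacentPairs_subset_offDiag n hp) q hq,
    sum_const_nat fun p hp => hf p hp q hq, card_adjacentPairs, offDiag_card, Finset.card_univ,
    Fintype.card_fin, ← Nat.mul_sub_one, mul_assoc]

lemma sum_perm_tieCount {n : ℕ} (w : Fin n → ℕ) :
    ∑ σ : Perm (Fin n), tieCount n (w ∘ σ) =
      ∑ p ∈ adjacentPairs n, #{σ : Perm (Fin n) | w (σ p.1) = w (σ p.2)} := by
  simp_rw [tieCount_eq_card_adjacentPairs_filter, card_filter]
  exact sum_comm

theorem mul_card_stabilizer_mul_sum_tieCount {n : ℕ} (w : Fin n → ℕ) :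
    n * (#{σ : Perm (Fin n) | w ∘ σ = w} *
        ∑ u ∈ univ.image (fun σ : Perm (Fin n) => w ∘ σ), tieCount n u) =
      n ! * #{p ∈ (univ : Finset (Fin n)).offDiag | w p.1 = w p.2} := by
  rw [← smul_eq_mul (a := #_), ← sum_perm_comp_eq_card_stabilizer_smul, sum_perm_tieCount,
    mul_sum_adjacentPairs_of_const _ fun p hp q hq =>
      card_perm_apply_eq_apply_of_ne w (mem_offDiag.mp hp).2.2 (mem_offDiag.mp hq).2.2,
    sum_offDiag_card_perm_apply_eq, Fintype.card_fin]

lemma prod_factorial_mul_two_mul_multinomial {κ : Type*} [Fintype κ] [DecidableEq κ]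
    {n : ℕ} (c : κ → ℕ) (hc : ∑ m, c m = n) (k : κ) :
    (∏ m, (c m)!) * (2 * if 2 ≤ c k then
        n ! / ((c k - 2)! * 2! * ∏ m ∈ univ.erase k, (c m)!) else 0) =
      n ! * (c k * (c k - 1)) := by
  split_ifs with h
  · set D := (c k - 2)! * 2! * ∏ m ∈ univ.erase k, (c m)!
    have hP : ∏ m, (c m)! = (c k).choose 2 * D := by
      rw [← mul_prod_erase univ _ (mem_univ k), ← choose_mul_factorial_mul_factorial h]
      ring
    have hD : D ∣ n ! :=
      (Dvd.intro_left _ hP.symm).trans (hc ▸ prod_factorial_dvd_factorial_sum _ _)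
    have hchoose : 2 * (c k).choose 2 = c k * (c k - 1) := by
      rw [choose_two_right, two_mul_div_two_of_even (even_mul_pred_self _)]
    calc (∏ m, (c m)!) * (2 * (n ! / D))
        = 2 * (c k).choose 2 * (D * (n ! / D)) := by rw [hP]; ring
      _ = n ! * (c k * (c k - 1)) := by rw [Nat.mul_div_cancel' hD, hchoose, mul_comm]
  · obtain h | h : c k = 0 ∨ c k = 1 := by omega
    all_goals simp [h]

/-- Let `w` be a word of length `n` whose distinct values, in increasing order, are
`v 0 < v 1 < ⋯ < v (l-1)`, with content `c k` = number of occurrences of `v k`.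
Then the total number of ties over all distinct rearrangements of `w` (its orbit
under the `S_n`-action permuting positions) equals
`(2/n) ∑_{k} multinomial(n; c_1, …, c_{k-1}, c_k - 2, 2, c_{k+1}, …, c_l)`,
where terms with `c_k < 2` are zero. -/
theorem total_ties_over_rearrangements (n l : ℕ) (w : Fin n → ℕ)
    (v : Fin l → ℕ) (hv : StrictMono v)
    (hrange : ∀ i : Fin n, ∃ k : Fin l, w i = v k)
    (hsurj : ∀ k : Fin l, ∃ i : Fin n, w i = v k)
    (c : Fin l → ℕ)
    (hc : ∀ k, c k = (Finset.univ.filter (fun i : Fin n => w i = v k)).card) :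
    n * ∑ u ∈ Finset.image (fun σ : Equiv.Perm (Fin n) => w ∘ σ) Finset.univ,
        tieCount n u =
      2 * ∑ k : Fin l,
        (if 2 ≤ c k then
          Nat.factorial n /
            ((c k - 2).factorial * Nat.factorial 2 *
              ∏ m ∈ Finset.univ.erase k, (c m).factorial)
        else 0) := by
  have himage : univ.image w = univ.image v := by
    ext x
    simp only [mem_image, mem_univ, true_and]
    constructor
    · rintro ⟨i, rfl⟩
      obtain ⟨k, hk⟩ := hrange i
      exact ⟨k, hk.symm⟩
    · rintro ⟨k, rfl⟩
      exact hsurj k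
  have hinj : Set.InjOn v ↑(univ : Finset (Fin l)) := hv.injective.injOn
  have hcontent : ∑ k, c k = n := by
    rw [← Fintype.card_fin n, ← Finset.card_univ, card_eq_sum_card_image w, himage,
      sum_image hinj]
    simp only [hc]
  have hstab : #{σ : Perm (Fin n) | w ∘ σ = w} = ∏ k, (c k)! := by
    rw [card_perm_comp_eq_self, himage, prod_image hinj]
    simp only [hc]
  have hpairs :
      #{p ∈ (univ : Finset (Fin n)).offDiag | w p.1 = w p.2} = ∑ k, c k * (c k - 1) := by
    rw [card_offDiag_filter_apply_eq, himage, sum_image hinj]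
    simp only [hc]
  apply Nat.eq_of_mul_eq_mul_left (prod_pos fun k _ => factorial_pos (c k))
  rw [mul_left_comm, ← hstab, mul_card_stabilizer_mul_sum_tieCount, hpairs, hstab, mul_sum,
    mul_sum, mul_sum]
  exact sum_congr rfl fun k _ => (prod_factorial_mul_two_mul_multinomial c hcontent k).symm
end
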